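/- arXiv:1502.00795 — 6 statements merged into one kernel-verified Lean document; each statement's English description precedes it below -/
import Mathlib

section
/- The coefficient of ds₁∧ds₂ in the twisted coboundary ∇(−s₁ds₂/(s₂L)) equals (λ₄−1)x₁s₁/(s₂L²) − [(λ₁+λ₃+1)/(s₂L) + λ₃/(QL)], as a rational function identity; here ∇η = d_sη + ω∧η with ω = λ₁ds₁/s₁ + λ₂ds₂/s₂ + λ₃dQ/Q + λ₄dL/L, Q = s₁s₂−s₁−s₂, L = 1−s₁x₁−s₂x₂. -/
/-!
For `η = f ds₂` the `ds₁∧ds₂`-coefficient of `∇η` is `∂f/∂s₁ + A f`, where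
`A = l₁/s₁ + l₃(s₂-1)/Q - l₄x₁/L` is the `ds₁`-component of `ω`. With `f = -s₁/(s₂L)`
everything is routine except the `Q`-term of `s₁ A`: since `s₁(s₂ - 1) = Q + s₂`, it splits
as `l₃ + l₃s₂/Q`, which is where the `l₃` in `l₁ + l₃ + 1` and the `l₃/(QL)` term come from.
-/

section
variable {K : Type*} [Field K] (l₁ l₃ l₄ x₁ s₁ s₂ Q L : K)

lemma dsOneCoeff_mul_eq (hs₁ : s₁ ≠ 0) (hQ : Q ≠ 0) (hsplit : s₁ * (s₂ - 1) = Q + s₂) :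
    (l₁ / s₁ + l₃ * (s₂ - 1) / Q - l₄ * x₁ / L) * s₁
      = l₁ + l₃ + l₃ * s₂ / Q - l₄ * x₁ * s₁ / L :=
  calc (l₁ / s₁ + l₃ * (s₂ - 1) / Q - l₄ * x₁ / L) * s₁
      = l₁ / s₁ * s₁ + l₃ * (s₁ * (s₂ - 1)) / Q - l₄ * x₁ * s₁ / L := by ring
    _ = l₁ + l₃ * (Q + s₂) / Q - l₄ * x₁ * s₁ / L := by rw [div_mul_cancel₀ _ hs₁, hsplit]
    _ = l₁ + l₃ + l₃ * s₂ / Q - l₄ * x₁ * s₁ / L := by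
      rw [mul_add, add_div, mul_div_cancel_right₀ _ hQ]
      ring

lemma twisted_coeff_eq (hs₁ : s₁ ≠ 0) (hs₂ : s₂ ≠ 0) (hQ : Q ≠ 0) (hL : L ≠ 0)
    (hsplit : s₁ * (s₂ - 1) = Q + s₂) :
    -(1 / (s₂ * L) + s₁ * x₁ / (s₂ * L ^ 2))
      - (l₁ / s₁ + l₃ * (s₂ - 1) / Q - l₄ * x₁ / L) * s₁ / (s₂ * L)
    = (l₄ - 1) * x₁ * s₁ / (s₂ * L ^ 2) - ((l₁ + l₃ + 1) / (s₂ * L) + l₃ / (Q * L)) := by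
  rw [dsOneCoeff_mul_eq l₁ l₃ l₄ x₁ s₁ s₂ Q L hs₁ hQ hsplit]
  field_simp
  ring

end

theorem twisted_coboundary_s1ds2_general (l₁ l₃ l₄ x₁ x₂ s₁ s₂ : ℂ)
    (hs₁ : s₁ ≠ 0) (hs₂ : s₂ ≠ 0)
    (hQ : s₁ * s₂ - s₁ - s₂ ≠ 0) (hL : 1 - s₁ * x₁ - s₂ * x₂ ≠ 0) :
    let Q := s₁ * s₂ - s₁ - s₂;
    let L := 1 - s₁ * x₁ - s₂ * x₂;
    -(1 / (s₂ * L) + s₁ * x₁ / (s₂ * L ^ 2))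
      - (l₁ / s₁ + l₃ * (s₂ - 1) / Q - l₄ * x₁ / L) * s₁ / (s₂ * L)
    = (l₄ - 1) * x₁ * s₁ / (s₂ * L ^ 2)
      - ((l₁ + l₃ + 1) / (s₂ * L) + l₃ / (Q * L)) :=
  twisted_coeff_eq l₁ l₃ l₄ x₁ s₁ s₂ _ _ hs₁ hs₂ hQ hL (by ring)

/-- The coefficient of `ds₁∧ds₂` in `∇(-s₁ds₂/(s₂L))`.
Writing `ω = A ds₁ + B ds₂` with `A = l₁/s₁ + l₃(s₂-1)/Q - l₄x₁/L`, the
coefficient of `ds₁∧ds₂` in `d_s(-s₁/(s₂L) ds₂) + ω∧(-s₁/(s₂L) ds₂)` equals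
`-∂/∂s₁(s₁/(s₂L)) - A·s₁/(s₂L) = -(1/(s₂L) + s₁x₁/(s₂L²)) - A s₁/(s₂L)`,
and this equals `(l₄-1)x₁s₁/(s₂L²) - (l₁+l₃+1)/(s₂L) - l₃/(QL)`. -/
theorem twisted_coboundary_s1ds2 (l₁ l₂ l₃ l₄ x₁ x₂ s₁ s₂ : ℂ)
    (hs₁ : s₁ ≠ 0) (hs₂ : s₂ ≠ 0)
    (hQ : s₁ * s₂ - s₁ - s₂ ≠ 0) (hL : 1 - s₁ * x₁ - s₂ * x₂ ≠ 0) :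
    let Q := s₁ * s₂ - s₁ - s₂;
    let L := 1 - s₁ * x₁ - s₂ * x₂;
    -(1 / (s₂ * L) + s₁ * x₁ / (s₂ * L ^ 2))
      - (l₁ / s₁ + l₃ * (s₂ - 1) / Q - l₄ * x₁ / L) * s₁ / (s₂ * L)
    = (l₄ - 1) * x₁ * s₁ / (s₂ * L ^ 2)
      - ((l₁ + l₃ + 1) / (s₂ * L) + l₃ / (Q * L)) :=
  twisted_coboundary_s1ds2_general l₁ l₃ l₄ x₁ x₂ s₁ s₂ hs₁ hs₂ hQ hL
end

section
/- Let Ξ̂¹, Ξ̂², Ξ̂³ be the constant 4×4 matrices of Theorem 5.3 and I₃,₁ = diag(1,1,1,−1). Then the connection 1-form Ξ̂ = Ξ̂¹dy₁/y₁ + Ξ̂²dy₂/y₂ + I₃,₁Ξ̂²I₃,₁⁻¹dy₁/(y₁−1) + I₃,₁Ξ̂¹I₃,₁⁻¹dy₂/(y₂−1) + Ξ̂³(dy₁+dy₂)/(y₁+y₂−1) satisfies the flatness condition Ξ̂ ∧ Ξ̂ = 0; equivalently, the coefficient of dy₁∧dy₂ in Ξ̂∧Ξ̂ vanishes identically: [Ξ̂¹/y₁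 + I₃,₁Ξ̂²I₃,₁/(y₁−1) + Ξ̂³/(y₁+y₂−1)] · [Ξ̂²/y₂ + I₃,₁Ξ̂¹I₃,₁/(y₂−1) + Ξ̂³/(y₁+y₂−1)] = [Ξ̂²/y₂ + I₃,₁Ξ̂¹I₃,₁/(y₂−1) + Ξ̂³/(y₁+y₂−1)] · [Ξ̂¹/y₁ + I₃,₁Ξ̂²I₃,₁/(y₁−1) + Ξ̂³/(y₁+y₂−1)] as matrices over ℂ(λ)(y₁,y₂). -/
set_option maxHeartbeats 1600000


open Matrix

/-- The constant matrix `Ξ̂¹` of Theorem 5.3. -/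
noncomputable def XiHat1 (l₁ l₂ l₃ l₄ : ℂ) : Matrix (Fin 4) (Fin 4) ℂ :=
  let l₁₂₃ := l₁ + l₂ + l₃
  let l₁₃₄ := -(l₁ + l₃ + l₄)
  !![0, -l₄, 0, 0;
     0, -l₁ - l₃, 0, 0;
     -l₁₂₃ / 2, (-l₂ + l₄) / 2, (-l₁ + l₄) / 2, -l₃ / 2;
     (l₁₃₄ - l₃) * l₁₂₃ / (2 * l₃), l₄ + (l₂ + l₄) * (l₁ + l₄) / (2 * l₃),
       (l₁ - l₄) * (l₁₃₄ - l₃) / (2 * l₃), (l₁₃₄ - l₃) / 2]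

/-- The constant matrix `Ξ̂²` of Theorem 5.3. -/
noncomputable def XiHat2 (l₁ l₂ l₃ l₄ : ℂ) : Matrix (Fin 4) (Fin 4) ℂ :=
  let l₁₂₃ := l₁ + l₂ + l₃
  let l₂₃₄ := -(l₂ + l₃ + l₄)
  !![0, 0, -l₄, 0;
     -l₁₂₃ / 2, (-l₂ + l₄) / 2, (-l₁ + l₄) / 2, -l₃ / 2;
     0, 0, -l₃ - l₂, 0;
     (l₂₃₄ - l₃) * l₁₂₃ / (2 * l₃), (l₂ - l₄) * (l₂₃₄ - l₃) / (2 * l₃),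
       l₄ + (l₂ + l₄) * (l₁ + l₄) / (2 * l₃), (l₂₃₄ - l₃) / 2]

/-- The constant matrix `Ξ̂³` of Theorem 5.3. -/
noncomputable def XiHat3 (l₁ l₂ l₃ l₄ : ℂ) : Matrix (Fin 4) (Fin 4) ℂ :=
  !![0, 0, 0, 0;
     0, 0, 0, 0;
     0, 0, 0, 0;
     0, 0, 0, 2 * (l₃ + l₄)]

/-- `I₃,₁ = diag(1,1,1,-1)`. -/
noncomputable def I31 : Matrix (Fin 4) (Fin 4) ℂ :=
  !![1, 0, 0, 0; 0, 1, 0, 0; 0, 0, 1, 0; 0, 0, 0, -1]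


section Aux

open Matrix

/-- `2l₃ • Ξ̂¹`, with polynomial entries. -/
noncomputable def Y1 (l₁ l₂ l₃ l₄ : ℂ) : Matrix (Fin 4) (Fin 4) ℂ :=
  let l₁₂₃ := l₁ + l₂ + l₃
  let l₁₃₄ := -(l₁ + l₃ + l₄)
  !![0, -(2*l₃*l₄), 0, 0;
     0, 2*l₃*(-l₁ - l₃), 0, 0;
     -(l₃*l₁₂₃), l₃*(-l₂ + l₄), l₃*(-l₁ + l₄), -(l₃*l₃);
     (l₁₃₄ - l₃) * l₁₂₃, 2*l₃*l₄ + (l₂ + l₄) * (l₁ + l₄),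
       (l₁ - l₄) * (l₁₃₄ - l₃), l₃*(l₁₃₄ - l₃)]

/-- `2l₃ • Ξ̂²`, with polynomial entries. -/
noncomputable def Y2 (l₁ l₂ l₃ l₄ : ℂ) : Matrix (Fin 4) (Fin 4) ℂ :=
  let l₁₂₃ := l₁ + l₂ + l₃
  let l₂₃₄ := -(l₂ + l₃ + l₄)
  !![0, 0, -(2*l₃*l₄), 0;
     -(l₃*l₁₂₃), l₃*(-l₂ + l₄), l₃*(-l₁ + l₄), -(l₃*l₃);
     0, 0, 2*l₃*(-l₃ - l₂), 0;
     (l₂₃₄ - l₃) * l₁₂₃, (l₂ - l₄) * (l₂₃₄ - l₃),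
       2*l₃*l₄ + (l₂ + l₄) * (l₁ + l₄), l₃*(l₂₃₄ - l₃)]

/-- `2l₃ • Ξ̂³`. -/
noncomputable def Y3 (l₁ l₂ l₃ l₄ : ℂ) : Matrix (Fin 4) (Fin 4) ℂ :=
  !![0, 0, 0, 0; 0, 0, 0, 0; 0, 0, 0, 0; 0, 0, 0, 2*l₃*(2 * (l₃ + l₄))]

/-- `I₃,₁ (2l₃ • Ξ̂¹) I₃,₁`. -/
noncomputable def Z1 (l₁ l₂ l₃ l₄ : ℂ) : Matrix (Fin 4) (Fin 4) ℂ :=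
  let l₁₂₃ := l₁ + l₂ + l₃
  let l₁₃₄ := -(l₁ + l₃ + l₄)
  !![0, -(2*l₃*l₄), 0, 0;
     0, 2*l₃*(-l₁ - l₃), 0, 0;
     -(l₃*l₁₂₃), l₃*(-l₂ + l₄), l₃*(-l₁ + l₄), l₃*l₃;
     -((l₁₃₄ - l₃) * l₁₂₃), -(2*l₃*l₄ + (l₂ + l₄) * (l₁ + l₄)),
       -((l₁ - l₄) * (l₁₃₄ - l₃)), l₃*(l₁₃₄ - l₃)]

/-- `I₃,₁ (2l₃ • Ξ̂²) I₃,₁`. -/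
noncomputable def Z2 (l₁ l₂ l₃ l₄ : ℂ) : Matrix (Fin 4) (Fin 4) ℂ :=
  let l₁₂₃ := l₁ + l₂ + l₃
  let l₂₃₄ := -(l₂ + l₃ + l₄)
  !![0, 0, -(2*l₃*l₄), 0;
     -(l₃*l₁₂₃), l₃*(-l₂ + l₄), l₃*(-l₁ + l₄), l₃*l₃;
     0, 0, 2*l₃*(-l₃ - l₂), 0;
     -((l₂₃₄ - l₃) * l₁₂₃), -((l₂ - l₄) * (l₂₃₄ - l₃)),
       -(2*l₃*l₄ + (l₂ + l₄) * (l₁ + l₄)), l₃*(l₂₃₄ - l₃)]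

lemma hY1 (l₁ l₂ l₃ l₄ : ℂ) (hl₃ : l₃ ≠ 0) :
    (2*l₃) • XiHat1 l₁ l₂ l₃ l₄ = Y1 l₁ l₂ l₃ l₄ := by
  ext i j
  fin_cases i <;> fin_cases j <;>
    simp [XiHat1, Y1] <;> field_simp <;> ring

lemma hY2 (l₁ l₂ l₃ l₄ : ℂ) (hl₃ : l₃ ≠ 0) :
    (2*l₃) • XiHat2 l₁ l₂ l₃ l₄ = Y2 l₁ l₂ l₃ l₄ := by
  ext i j
  fin_cases i <;> fin_cases j <;>
    simp [XiHat2, Y2] <;> field_simp <;> ring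

lemma hY3 (l₁ l₂ l₃ l₄ : ℂ) :
    (2*l₃) • XiHat3 l₁ l₂ l₃ l₄ = Y3 l₁ l₂ l₃ l₄ := by
  ext i j
  fin_cases i <;> fin_cases j <;>
    simp [XiHat3, Y3, Matrix.vecHead, Matrix.vecTail]

lemma cY1 (l₁ l₂ l₃ l₄ : ℂ) :
    I31 * Y1 l₁ l₂ l₃ l₄ * I31 = Z1 l₁ l₂ l₃ l₄ := by
  ext i j
  fin_cases i <;> fin_cases j <;>
    simp [Y1, Z1, I31, Matrix.mul_apply, Fin.sum_univ_four, Matrix.vecHead, Matrix.vecTail, Function.comp] <;> ring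

lemma cY2 (l₁ l₂ l₃ l₄ : ℂ) :
    I31 * Y2 l₁ l₂ l₃ l₄ * I31 = Z2 l₁ l₂ l₃ l₄ := by
  ext i j
  fin_cases i <;> fin_cases j <;>
    simp [Y2, Z2, I31, Matrix.mul_apply, Fin.sum_univ_four, Matrix.vecHead, Matrix.vecTail, Function.comp] <;> ring

lemma yPS (l₁ l₂ l₃ l₄ : ℂ) :
    Y1 l₁ l₂ l₃ l₄ * Y2 l₁ l₂ l₃ l₄ = Y2 l₁ l₂ l₃ l₄ * Y1 l₁ l₂ l₃ l₄ := by
  ext i j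
  fin_cases i <;> fin_cases j <;>
    simp [Y1, Y2, Matrix.mul_apply, Fin.sum_univ_four, Matrix.vecHead, Matrix.vecTail, Function.comp] <;> ring

lemma yQT (l₁ l₂ l₃ l₄ : ℂ) :
    Z1 l₁ l₂ l₃ l₄ * Z2 l₁ l₂ l₃ l₄ = Z2 l₁ l₂ l₃ l₄ * Z1 l₁ l₂ l₃ l₄ := by
  ext i j
  fin_cases i <;> fin_cases j <;>
    simp [Z1, Z2, Matrix.mul_apply, Fin.sum_univ_four, Matrix.vecHead, Matrix.vecTail, Function.comp] <;> ring

lemma yTP (l₁ l₂ l₃ l₄ : ℂ) :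
    Z1 l₁ l₂ l₃ l₄ * Y1 l₁ l₂ l₃ l₄
      = Y1 l₁ l₂ l₃ l₄ * Z1 l₁ l₂ l₃ l₄
        - Y3 l₁ l₂ l₃ l₄ * Y1 l₁ l₂ l₃ l₄
        + Y1 l₁ l₂ l₃ l₄ * Y3 l₁ l₂ l₃ l₄ := by
  ext i j
  fin_cases i <;> fin_cases j <;>
    simp [Y1, Y3, Z1, Matrix.mul_apply, Fin.sum_univ_four, Matrix.vecHead, Matrix.vecTail, Function.comp] <;> ring

lemma yTR (l₁ l₂ l₃ l₄ : ℂ) :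
    Z1 l₁ l₂ l₃ l₄ * Y3 l₁ l₂ l₃ l₄
      = Y3 l₁ l₂ l₃ l₄ * Z1 l₁ l₂ l₃ l₄
        - Y1 l₁ l₂ l₃ l₄ * Y3 l₁ l₂ l₃ l₄
        + Y3 l₁ l₂ l₃ l₄ * Y1 l₁ l₂ l₃ l₄ := by
  ext i j
  fin_cases i <;> fin_cases j <;>
    simp [Y1, Y3, Z1, Matrix.mul_apply, Fin.sum_univ_four, Matrix.vecHead, Matrix.vecTail, Function.comp] <;> ring

lemma ySQ (l₁ l₂ l₃ l₄ : ℂ) :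
    Y2 l₁ l₂ l₃ l₄ * Z2 l₁ l₂ l₃ l₄
      = Z2 l₁ l₂ l₃ l₄ * Y2 l₁ l₂ l₃ l₄
        - Y2 l₁ l₂ l₃ l₄ * Y3 l₁ l₂ l₃ l₄
        + Y3 l₁ l₂ l₃ l₄ * Y2 l₁ l₂ l₃ l₄ := by
  ext i j
  fin_cases i <;> fin_cases j <;>
    simp [Y2, Y3, Z2, Matrix.mul_apply, Fin.sum_univ_four, Matrix.vecHead, Matrix.vecTail, Function.comp] <;> ring

lemma yRQ (l₁ l₂ l₃ l₄ : ℂ) :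
    Y3 l₁ l₂ l₃ l₄ * Z2 l₁ l₂ l₃ l₄
      = Z2 l₁ l₂ l₃ l₄ * Y3 l₁ l₂ l₃ l₄
        - Y3 l₁ l₂ l₃ l₄ * Y2 l₁ l₂ l₃ l₄
        + Y2 l₁ l₂ l₃ l₄ * Y3 l₁ l₂ l₃ l₄ := by
  ext i j
  fin_cases i <;> fin_cases j <;>
    simp [Y2, Y3, Z2, Matrix.mul_apply, Fin.sum_univ_four, Matrix.vecHead, Matrix.vecTail, Function.comp] <;> ring

lemma sc {c : ℂ} (hc : c ≠ 0) {M N : Matrix (Fin 4) (Fin 4) ℂ}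
    (h : c • M = c • N) : M = N :=
  smul_right_injective _ hc h

lemma smulmul (c d : ℂ) (A B : Matrix (Fin 4) (Fin 4) ℂ) :
    (c • A) * (d • B) = (c * d) • (A * B) := by
  rw [Matrix.smul_mul, Matrix.mul_smul, smul_smul]

lemma smulexp (c : ℂ) (M N : Matrix (Fin 4) (Fin 4) ℂ) :
    (2 * c * (2 * c)) • (M * N) = ((2 * c) • M) * ((2 * c) • N) :=
  (smulmul _ _ _ _).symm

lemma aux (P Q S T R' : Matrix (Fin 4) (Fin 4) ℂ) {a b c d e : ℂ}
    (hps : P * S = S * P) (hqt : T * Q = Q * T)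
    (htp : T * P = P * T - R' * P + P * R')
    (htr : T * R' = R' * T - P * R' + R' * P)
    (hsq : S * Q = Q * S - S * R' + R' * S)
    (hrq : R' * Q = Q * R' - R' * S + S * R')
    (hs1 : a * e = a * c + c * e) (hs2 : b * d = b * c + c * d) :
    (a • P + b • Q + c • R') * (d • S + e • T + c • R')
      = (d • S + e • T + c • R') * (a • P + b • Q + c • R') := by
  simp only [add_mul, mul_add, Matrix.smul_mul, Matrix.mul_smul, hps, hqt, htp, htr, hsq, hrq,
    smul_sub, smul_add, smul_smul]
  match_scalars <;>
    first
      | ring1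
      | linear_combination hs1
      | linear_combination -hs1
      | linear_combination hs2
      | linear_combination -hs2

end Aux

/-- Flatness `Ξ̂ ∧ Ξ̂ = 0` of the logarithmic connection of Theorem 5.3:
the `dy₁∧dy₂`-coefficient of `Ξ̂∧Ξ̂` vanishes, i.e. the `dy₁`- and
`dy₂`-coefficient matrices commute (note `I₃,₁⁻¹ = I₃,₁`). -/
theorem XiHat_flat (l₁ l₂ l₃ l₄ : ℂ) (hl₃ : l₃ ≠ 0) (y₁ y₂ : ℂ)
    (hy₁ : y₁ ≠ 0) (hy₂ : y₂ ≠ 0) (hy₁' : y₁ - 1 ≠ 0) (hy₂' : y₂ - 1 ≠ 0)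
    (hy₁₂ : y₁ + y₂ - 1 ≠ 0) :
    let A := y₁⁻¹ • XiHat1 l₁ l₂ l₃ l₄
      + (y₁ - 1)⁻¹ • (I31 * XiHat2 l₁ l₂ l₃ l₄ * I31)
      + (y₁ + y₂ - 1)⁻¹ • XiHat3 l₁ l₂ l₃ l₄;
    let B := y₂⁻¹ • XiHat2 l₁ l₂ l₃ l₄
      + (y₂ - 1)⁻¹ • (I31 * XiHat1 l₁ l₂ l₃ l₄ * I31)
      + (y₁ + y₂ - 1)⁻¹ • XiHat3 l₁ l₂ l₃ l₄;
    A * B = B * A := by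
  intro A B
  have hc : (2*l₃ : ℂ) ≠ 0 := by simpa using hl₃
  have hc2 : (2*l₃) * (2*l₃) ≠ 0 := mul_ne_zero hc hc
  have e1 := hY1 l₁ l₂ l₃ l₄ hl₃
  have e2 := hY2 l₁ l₂ l₃ l₄ hl₃
  have e3 := hY3 l₁ l₂ l₃ l₄
  have eT : (2*l₃) • (I31 * XiHat1 l₁ l₂ l₃ l₄ * I31) = Z1 l₁ l₂ l₃ l₄ := by
    rw [← cY1, ← e1, Matrix.mul_smul, Matrix.smul_mul]
  have eQ : (2*l₃) • (I31 * XiHat2 l₁ l₂ l₃ l₄ * I31) = Z2 l₁ l₂ l₃ l₄ := by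
    rw [← cY2, ← e2, Matrix.mul_smul, Matrix.smul_mul]
  apply aux
  · apply sc hc2
    simp only [smulexp, smul_add, smul_sub, e1, e2, e3, eT, eQ]
    exact yPS l₁ l₂ l₃ l₄
  · apply sc hc2
    simp only [smulexp, smul_add, smul_sub, e1, e2, e3, eT, eQ]
    exact yQT l₁ l₂ l₃ l₄
  · apply sc hc2
    simp only [smul_add, smul_sub, smulexp, e1, e2, e3, eT, eQ]
    exact yTP l₁ l₂ l₃ l₄
  · apply sc hc2
    simp only [smul_add, smul_sub, smulexp, e1, e2, e3, eT, eQ]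
    exact yTR l₁ l₂ l₃ l₄
  · apply sc hc2
    simp only [smul_add, smul_sub, smulexp, e1, e2, e3, eT, eQ]
    exact ySQ l₁ l₂ l₃ l₄
  · apply sc hc2
    simp only [smul_add, smul_sub, smulexp, e1, e2, e3, eT, eQ]
    exact yRQ l₁ l₂ l₃ l₄
  · field_simp
    ring
  · field_simp
    ring
end

section
/- For the matrices Ξ̂¹, Ξ̂², Ξ̂³ of Theorem 5.3, the logarithmic connection form Ξ̂ with poles on the five lines y₁=0, y₂=0, y₁=1, y₂=1, y₁+y₂=1 is flat: dΞ̂ = 0 and Ξ̂∧Ξ̂ = 0, so its curvature dΞ̂ − Ξ̂∧Ξ̂ vanishes. -/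
open Matrix

/-- `2l₃ · Ξ̂¹`, with polynomial entries. -/
noncomputable def MHat1 (l₁ l₂ l₃ l₄ : ℂ) : Matrix (Fin 4) (Fin 4) ℂ :=
  let l₁₂₃ := l₁ + l₂ + l₃
  let l₁₃₄ := -(l₁ + l₃ + l₄)
  !![0, -(2*l₃*l₄), 0, 0;
     0, 2*l₃*(-l₁ - l₃), 0, 0;
     -(l₃*l₁₂₃), l₃*(-l₂ + l₄), l₃*(-l₁ + l₄), -(l₃*l₃);
     (l₁₃₄ - l₃) * l₁₂₃, 2*l₃*l₄ + (l₂ + l₄) * (l₁ + l₄),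
       (l₁ - l₄) * (l₁₃₄ - l₃), l₃*(l₁₃₄ - l₃)]

/-- `2l₃ · Ξ̂²`, with polynomial entries. -/
noncomputable def MHat2 (l₁ l₂ l₃ l₄ : ℂ) : Matrix (Fin 4) (Fin 4) ℂ :=
  let l₁₂₃ := l₁ + l₂ + l₃
  let l₂₃₄ := -(l₂ + l₃ + l₄)
  !![0, 0, -(2*l₃*l₄), 0;
     -(l₃*l₁₂₃), l₃*(-l₂ + l₄), l₃*(-l₁ + l₄), -(l₃*l₃);
     0, 0, 2*l₃*(-l₃ - l₂), 0;
     (l₂₃₄ - l₃) * l₁₂₃, (l₂ - l₄) * (l₂₃₄ - l₃),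
       2*l₃*l₄ + (l₂ + l₄) * (l₁ + l₄), l₃*(l₂₃₄ - l₃)]

/-- `2l₃ · Ξ̂³`. -/
noncomputable def MHat3 (l₁ l₂ l₃ l₄ : ℂ) : Matrix (Fin 4) (Fin 4) ℂ :=
  !![0, 0, 0, 0; 0, 0, 0, 0; 0, 0, 0, 0; 0, 0, 0, 4*l₃*(l₃+l₄)]

lemma XiHat1_eq (l₁ l₂ l₃ l₄ : ℂ) (hl₃ : l₃ ≠ 0) :
    XiHat1 l₁ l₂ l₃ l₄ = (2*l₃)⁻¹ • MHat1 l₁ l₂ l₃ l₄ := by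
  ext i j
  fin_cases i <;> fin_cases j <;>
    simp [XiHat1, MHat1] <;> (try field_simp) <;> (first | exact Or.inl trivial | ring1 | exact Or.inl (by ring))

lemma XiHat2_eq (l₁ l₂ l₃ l₄ : ℂ) (hl₃ : l₃ ≠ 0) :
    XiHat2 l₁ l₂ l₃ l₄ = (2*l₃)⁻¹ • MHat2 l₁ l₂ l₃ l₄ := by
  ext i j
  fin_cases i <;> fin_cases j <;>
    simp [XiHat2, MHat2] <;> (try field_simp) <;> (first | exact Or.inl trivial | ring1 | exact Or.inl (by ring))

lemma XiHat3_eq (l₁ l₂ l₃ l₄ : ℂ) (hl₃ : l₃ ≠ 0) :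
    XiHat3 l₁ l₂ l₃ l₄ = (2*l₃)⁻¹ • MHat3 l₁ l₂ l₃ l₄ := by
  ext i j
  fin_cases i <;> fin_cases j <;>
    simp [XiHat3, MHat3, Matrix.vecHead, Matrix.vecTail] <;> (try field_simp) <;> (first | exact Or.inl trivial | ring1 | exact Or.inl (by ring))

lemma flat_aux (X1 X2 X3 Y1 Y2 : Matrix (Fin 4) (Fin 4) ℂ) (a b c d e : ℂ)
    (h12 : X1 * X2 = X2 * X1)
    (hYY : Y1 * Y2 = Y2 * Y1)
    (hY11 : Y1 * X1 = X1 * Y1 + (X1 * X3 - X3 * X1))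
    (hY13 : Y1 * X3 = X3 * Y1 - (X1 * X3 - X3 * X1))
    (h2Y2 : X2 * Y2 = Y2 * X2 + (Y2 * X3 - X3 * Y2))
    (h23 : X2 * X3 = X3 * X2 - (Y2 * X3 - X3 * Y2))
    (hc1 : e * a - e * c - c * a = 0)
    (hc2 : d * b - d * c - c * b = 0) :
    (a • X1 + b • Y2 + c • X3) * (d • X2 + e • Y1 + c • X3)
      = (d • X2 + e • Y1 + c • X3) * (a • X1 + b • Y2 + c • X3) := by
  simp only [add_mul, mul_add, smul_mul_assoc, mul_smul_comm, smul_smul]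
  rw [← h12, hYY, hY11, hY13, h2Y2, h23]
  simp only [mul_add, mul_sub, smul_add, smul_sub]
  match_scalars <;>
    first
      | ring1
      | linear_combination hc1
      | linear_combination -hc1
      | linear_combination hc2
      | linear_combination -hc2

/-- `I₃,₁ (2l₃Ξ̂¹) I₃,₁`, explicitly. -/
noncomputable def YHat1 (l₁ l₂ l₃ l₄ : ℂ) : Matrix (Fin 4) (Fin 4) ℂ :=
  let l₁₂₃ := l₁ + l₂ + l₃
  let l₁₃₄ := -(l₁ + l₃ + l₄)
  !![0, -(2*l₃*l₄), 0, 0;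
     0, 2*l₃*(-l₁ - l₃), 0, 0;
     -(l₃*l₁₂₃), l₃*(-l₂ + l₄), l₃*(-l₁ + l₄), l₃*l₃;
     -((l₁₃₄ - l₃) * l₁₂₃), -(2*l₃*l₄ + (l₂ + l₄) * (l₁ + l₄)),
       -((l₁ - l₄) * (l₁₃₄ - l₃)), l₃*(l₁₃₄ - l₃)]

/-- `I₃,₁ (2l₃Ξ̂²) I₃,₁`, explicitly. -/
noncomputable def YHat2 (l₁ l₂ l₃ l₄ : ℂ) : Matrix (Fin 4) (Fin 4) ℂ :=
  let l₁₂₃ := l₁ + l₂ + l₃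
  let l₂₃₄ := -(l₂ + l₃ + l₄)
  !![0, 0, -(2*l₃*l₄), 0;
     -(l₃*l₁₂₃), l₃*(-l₂ + l₄), l₃*(-l₁ + l₄), l₃*l₃;
     0, 0, 2*l₃*(-l₃ - l₂), 0;
     -((l₂₃₄ - l₃) * l₁₂₃), -((l₂ - l₄) * (l₂₃₄ - l₃)),
       -(2*l₃*l₄ + (l₂ + l₄) * (l₁ + l₄)), l₃*(l₂₃₄ - l₃)]

set_option maxHeartbeats 1600000 in
lemma conj1 (l₁ l₂ l₃ l₄ : ℂ) :
    I31 * MHat1 l₁ l₂ l₃ l₄ * I31 = YHat1 l₁ l₂ l₃ l₄ := by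
  ext i j
  fin_cases i <;> fin_cases j <;>
    simp [MHat1, YHat1, I31, Matrix.mul_apply, Fin.sum_univ_four, Matrix.vecHead, Matrix.vecTail]

set_option maxHeartbeats 1600000 in
lemma conj2 (l₁ l₂ l₃ l₄ : ℂ) :
    I31 * MHat2 l₁ l₂ l₃ l₄ * I31 = YHat2 l₁ l₂ l₃ l₄ := by
  ext i j
  fin_cases i <;> fin_cases j <;>
    simp [MHat2, YHat2, I31, Matrix.mul_apply, Fin.sum_univ_four, Matrix.vecHead, Matrix.vecTail]

section Comm
set_option maxHeartbeats 1600000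
variable (l₁ l₂ l₃ l₄ : ℂ)

local notation "X1" => MHat1 l₁ l₂ l₃ l₄
local notation "X2" => MHat2 l₁ l₂ l₃ l₄
local notation "X3" => MHat3 l₁ l₂ l₃ l₄
local notation "Y1" => YHat1 l₁ l₂ l₃ l₄
local notation "Y2" => YHat2 l₁ l₂ l₃ l₄

lemma comm12 : X1 * X2 = X2 * X1 := by
  ext i j
  fin_cases i <;> fin_cases j <;>
    simp [MHat1, MHat2, Matrix.mul_apply, Fin.sum_univ_four, Matrix.vecHead, Matrix.vecTail] <;> ring

lemma commYY : Y1 * Y2 = Y2 * Y1 := by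
  ext i j
  fin_cases i <;> fin_cases j <;>
    simp [YHat1, YHat2, Matrix.mul_apply, Fin.sum_univ_four, Matrix.vecHead, Matrix.vecTail] <;> ring

lemma commY11 : Y1 * X1 = X1 * Y1 + (X1 * X3 - X3 * X1) := by
  ext i j
  fin_cases i <;> fin_cases j <;>
    simp [MHat1, YHat1, MHat3, Matrix.mul_apply, Fin.sum_univ_four, Matrix.vecHead, Matrix.vecTail] <;> ring

lemma commY13 : Y1 * X3 = X3 * Y1 - (X1 * X3 - X3 * X1) := by
  ext i j
  fin_cases i <;> fin_cases j <;>
    simp [MHat1, YHat1, MHat3, Matrix.mul_apply, Fin.sum_univ_four, Matrix.vecHead, Matrix.vecTail] <;> ring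

lemma comm2Y2 : X2 * Y2 = Y2 * X2 + (Y2 * X3 - X3 * Y2) := by
  ext i j
  fin_cases i <;> fin_cases j <;>
    simp [MHat2, YHat2, MHat3, Matrix.mul_apply, Fin.sum_univ_four, Matrix.vecHead, Matrix.vecTail] <;> ring

lemma comm23 : X2 * X3 = X3 * X2 - (Y2 * X3 - X3 * Y2) := by
  ext i j
  fin_cases i <;> fin_cases j <;>
    simp [MHat2, YHat2, MHat3, Matrix.mul_apply, Fin.sum_univ_four, Matrix.vecHead, Matrix.vecTail] <;> ring

end Comm

/-- Theorem 5.3: the connection `Ξ̂` is closed and flat, `dΞ̂ = 0` and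
`Ξ̂∧Ξ̂ = 0`.  The `dy₁`-coefficient of `Ξ̂` is
`A(y₁,y₂) = Ξ̂¹/y₁ + I₃,₁Ξ̂²I₃,₁/(y₁-1) + Ξ̂³/(y₁+y₂-1)` and the
`dy₂`-coefficient is
`B(y₁,y₂) = Ξ̂²/y₂ + I₃,₁Ξ̂¹I₃,₁/(y₂-1) + Ξ̂³/(y₁+y₂-1)`;
`dΞ̂ = 0` reads `∂A/∂y₂ = ∂B/∂y₁` (entrywise), and `Ξ̂∧Ξ̂ = 0` reads
`AB = BA`. -/
theorem XiHat_closed_and_flat (l₁ l₂ l₃ l₄ : ℂ) (hl₃ : l₃ ≠ 0) (y₁ y₂ : ℂ)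
    (hy₁ : y₁ ≠ 0) (hy₂ : y₂ ≠ 0) (hy₁' : y₁ - 1 ≠ 0) (hy₂' : y₂ - 1 ≠ 0)
    (hy₁₂ : y₁ + y₂ - 1 ≠ 0) :
    let A : ℂ → ℂ → Matrix (Fin 4) (Fin 4) ℂ := fun u v =>
      u⁻¹ • XiHat1 l₁ l₂ l₃ l₄
        + (u - 1)⁻¹ • (I31 * XiHat2 l₁ l₂ l₃ l₄ * I31)
        + (u + v - 1)⁻¹ • XiHat3 l₁ l₂ l₃ l₄;
    let B : ℂ → ℂ → Matrix (Fin 4) (Fin 4) ℂ := fun u v =>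
      v⁻¹ • XiHat2 l₁ l₂ l₃ l₄
        + (v - 1)⁻¹ • (I31 * XiHat1 l₁ l₂ l₃ l₄ * I31)
        + (u + v - 1)⁻¹ • XiHat3 l₁ l₂ l₃ l₄;
    (∀ i j : Fin 4,
      deriv (fun t => A y₁ t i j) y₂ = deriv (fun t => B t y₂ i j) y₁) ∧
    A y₁ y₂ * B y₁ y₂ = B y₁ y₂ * A y₁ y₂ := by
  intro A B
  constructor
  · intro i j
    have e1 : (fun t : ℂ => A y₁ t i j)
        = fun t : ℂ => (y₁⁻¹ • XiHat1 l₁ l₂ l₃ l₄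
            + (y₁ - 1)⁻¹ • (I31 * XiHat2 l₁ l₂ l₃ l₄ * I31)) i j
          + (y₁ + t - 1)⁻¹ * XiHat3 l₁ l₂ l₃ l₄ i j := by
      funext t
      simp [A, Matrix.add_apply, Matrix.smul_apply, smul_eq_mul]
    have e2 : (fun t : ℂ => B t y₂ i j)
        = fun t : ℂ => (y₂⁻¹ • XiHat2 l₁ l₂ l₃ l₄
            + (y₂ - 1)⁻¹ • (I31 * XiHat1 l₁ l₂ l₃ l₄ * I31)) i j
          + (t + y₂ - 1)⁻¹ * XiHat3 l₁ l₂ l₃ l₄ i j := by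
      funext t
      simp [B, Matrix.add_apply, Matrix.smul_apply, smul_eq_mul]
    rw [e1, e2]
    have d1 : HasDerivAt (fun t : ℂ => y₁ + t - 1) 1 y₂ := by
      simpa using ((hasDerivAt_id y₂).const_add y₁).sub_const 1
    have d2 : HasDerivAt (fun t : ℂ => t + y₂ - 1) 1 y₁ := by
      simpa using ((hasDerivAt_id y₁).add_const y₂).sub_const 1
    have h1 := ((hasDerivAt_const y₂ ((y₁⁻¹ • XiHat1 l₁ l₂ l₃ l₄
            + (y₁ - 1)⁻¹ • (I31 * XiHat2 l₁ l₂ l₃ l₄ * I31)) i j)).add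
      ((d1.inv hy₁₂).mul_const (XiHat3 l₁ l₂ l₃ l₄ i j)))
    have h2 := ((hasDerivAt_const y₁ ((y₂⁻¹ • XiHat2 l₁ l₂ l₃ l₄
            + (y₂ - 1)⁻¹ • (I31 * XiHat1 l₁ l₂ l₃ l₄ * I31)) i j)).add
      ((d2.inv hy₁₂).mul_const (XiHat3 l₁ l₂ l₃ l₄ i j)))
    simp only [Pi.add_def, Pi.inv_apply] at h1 h2
    rw [h1.deriv, h2.deriv]
  · have hc1 : (y₂ - 1)⁻¹ * y₁⁻¹ - (y₂ - 1)⁻¹ * (y₁ + y₂ - 1)⁻¹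
        - (y₁ + y₂ - 1)⁻¹ * y₁⁻¹ = 0 := by
      field_simp
      ring
    have hc2 : y₂⁻¹ * (y₁ - 1)⁻¹ - y₂⁻¹ * (y₁ + y₂ - 1)⁻¹
        - (y₁ + y₂ - 1)⁻¹ * (y₁ - 1)⁻¹ = 0 := by
      field_simp
      ring
    have key := flat_aux (MHat1 l₁ l₂ l₃ l₄) (MHat2 l₁ l₂ l₃ l₄) (MHat3 l₁ l₂ l₃ l₄)
      (YHat1 l₁ l₂ l₃ l₄) (YHat2 l₁ l₂ l₃ l₄)
      y₁⁻¹ (y₁ - 1)⁻¹ (y₁ + y₂ - 1)⁻¹ y₂⁻¹ (y₂ - 1)⁻¹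
      (comm12 l₁ l₂ l₃ l₄) (commYY l₁ l₂ l₃ l₄) (commY11 l₁ l₂ l₃ l₄)
      (commY13 l₁ l₂ l₃ l₄) (comm2Y2 l₁ l₂ l₃ l₄) (comm23 l₁ l₂ l₃ l₄) hc1 hc2
    have hA : A y₁ y₂ = (2*l₃)⁻¹ • (y₁⁻¹ • MHat1 l₁ l₂ l₃ l₄
        + (y₁ - 1)⁻¹ • YHat2 l₁ l₂ l₃ l₄ + (y₁ + y₂ - 1)⁻¹ • MHat3 l₁ l₂ l₃ l₄) := by
      show y₁⁻¹ • XiHat1 l₁ l₂ l₃ l₄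
        + (y₁ - 1)⁻¹ • (I31 * XiHat2 l₁ l₂ l₃ l₄ * I31)
        + (y₁ + y₂ - 1)⁻¹ • XiHat3 l₁ l₂ l₃ l₄ = _
      rw [XiHat1_eq l₁ l₂ l₃ l₄ hl₃, XiHat2_eq l₁ l₂ l₃ l₄ hl₃,
        XiHat3_eq l₁ l₂ l₃ l₄ hl₃, Matrix.mul_smul, Matrix.smul_mul, conj2]
      module
    have hB : B y₁ y₂ = (2*l₃)⁻¹ • (y₂⁻¹ • MHat2 l₁ l₂ l₃ l₄
        + (y₂ - 1)⁻¹ • YHat1 l₁ l₂ l₃ l₄ + (y₁ + y₂ - 1)⁻¹ • MHat3 l₁ l₂ l₃ l₄) := by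
      show y₂⁻¹ • XiHat2 l₁ l₂ l₃ l₄
        + (y₂ - 1)⁻¹ • (I31 * XiHat1 l₁ l₂ l₃ l₄ * I31)
        + (y₁ + y₂ - 1)⁻¹ • XiHat3 l₁ l₂ l₃ l₄ = _
      rw [XiHat1_eq l₁ l₂ l₃ l₄ hl₃, XiHat2_eq l₁ l₂ l₃ l₄ hl₃,
        XiHat3_eq l₁ l₂ l₃ l₄ hl₃, Matrix.mul_smul, Matrix.smul_mul, conj1]
      module
    rw [hA, hB]
    simp only [Matrix.smul_mul, Matrix.mul_smul, key]
end

section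
/- The matrix Ξ̂¹ of Theorem 5.3 has eigenvalues 0 and −(λ₁+λ₃), each with 2-dimensional eigenspace; moreover the row vectors e₂ = (0,1,0,0) and e₅ = (λ₁₂₃/λ₃, (λ₂−λ₄)/λ₃, (λ₁−λ₄)/λ₃, 1) span the left −(λ₁+λ₃)-eigenspace, i.e., e₂Ξ̂¹ = −(λ₁+λ₃)e₂ and e₅Ξ̂¹ = −(λ₁+λ₃)e₅. -/
open Matrix

set_option maxHeartbeats 1000000 in
/-- Lemma 5.7 (i): `Ξ̂¹` has eigenvalues `0` and `-(λ₁+λ₃)`, each with a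
`2`-dimensional (left) eigenspace, and the left `-(λ₁+λ₃)`-eigenspace is
spanned by `e₂ = (0,1,0,0)` and `e₅ = (λ₁₂₃/λ₃, (λ₂-λ₄)/λ₃, (λ₁-λ₄)/λ₃, 1)`.
Left eigenvectors of `Ξ̂¹` are eigenvectors of `(Ξ̂¹)ᵀ`. -/
theorem XiHat1_eigen (l₁ l₂ l₃ l₄ : ℂ) (hl₃ : l₃ ≠ 0) (h13 : l₁ + l₃ ≠ 0) :
    let M := XiHat1 l₁ l₂ l₃ l₄;
    let e₂ : Fin 4 → ℂ := ![0, 1, 0, 0];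
    let e₅ : Fin 4 → ℂ :=
      ![(l₁ + l₂ + l₃) / l₃, (l₂ - l₄) / l₃, (l₁ - l₄) / l₃, 1];
    Module.finrank ℂ (Module.End.eigenspace (Matrix.toLin' Mᵀ) 0) = 2 ∧
    Module.finrank ℂ (Module.End.eigenspace (Matrix.toLin' Mᵀ) (-(l₁ + l₃))) = 2 ∧
    Submodule.span ℂ {e₂, e₅} = Module.End.eigenspace (Matrix.toLin' Mᵀ) (-(l₁ + l₃)) ∧
    Matrix.vecMul e₂ M = (-(l₁ + l₃)) • e₂ ∧
    Matrix.vecMul e₅ M = (-(l₁ + l₃)) • e₅ := by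
  intro M e₂ e₅
  have hM : M = XiHat1 l₁ l₂ l₃ l₄ := rfl
  -- eigenvector computations
  have h2 : Matrix.vecMul e₂ M = (-(l₁ + l₃)) • e₂ := by
    funext i
    fin_cases i <;>
      simp [hM, XiHat1, Matrix.vecMul, dotProduct, Fin.sum_univ_four, e₂] <;> ring
  have h5 : Matrix.vecMul e₅ M = (-(l₁ + l₃)) • e₅ := by
    funext i
    fin_cases i <;>
      simp [hM, XiHat1, Matrix.vecMul, dotProduct, Fin.sum_univ_four, e₅] <;>
      field_simp <;> ring
  set v₁ : Fin 4 → ℂ := ![l₁ + l₃, -l₄, 0, 0] with hv₁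
  set v₂ : Fin 4 → ℂ :=
    ![0, l₂ * (l₁ + l₃ + l₄) / (l₃ * (l₁ + l₃)), -(l₁ + 2 * l₃ + l₄) / l₃, 1] with hv₂
  have h1z : Matrix.vecMul v₁ M = (0 : ℂ) • v₁ := by
    funext i
    fin_cases i <;>
      simp [hM, XiHat1, Matrix.vecMul, dotProduct, Fin.sum_univ_four, hv₁] <;> ring
  have h2z : Matrix.vecMul v₂ M = (0 : ℂ) • v₂ := by
    funext i
    fin_cases i <;>
      simp [hM, XiHat1, Matrix.vecMul, dotProduct, Fin.sum_univ_four, hv₂] <;>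
      field_simp <;> ring
  set f := Matrix.toLin' Mᵀ with hf
  have hmem : ∀ (v : Fin 4 → ℂ) (μ : ℂ), Matrix.vecMul v M = μ • v →
      v ∈ Module.End.eigenspace f μ := by
    intro v μ hv
    rw [Module.End.mem_eigenspace_iff, hf, Matrix.toLin'_apply, Matrix.mulVec_transpose, hv]
  -- linear independence
  have hind : ∀ v w : Fin 4 → ℂ, LinearIndependent ℂ ![v, w] →
      Module.finrank ℂ (Submodule.span ℂ {v, w}) = 2 := by
    intro v w h
    have hr : ({v, w} : Set (Fin 4 → ℂ)) = Set.range ![v, w] := by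
      rw [Matrix.range_cons, Matrix.range_cons_empty]
      rfl
    rw [hr, finrank_span_eq_card h]
    simp
  have hi25 : LinearIndependent ℂ ![e₂, e₅] := by
    rw [LinearIndependent.pair_iff]
    intro s t h
    have h4 := congrFun h 3
    have h1 := congrFun h 1
    simp [e₂, e₅] at h4 h1
    subst h4
    simpa using h1
  have hi12 : LinearIndependent ℂ ![v₁, v₂] := by
    rw [LinearIndependent.pair_iff]
    intro s t h
    have h4 := congrFun h 3
    have h0 := congrFun h 0
    simp [hv₁, hv₂] at h4 h0
    subst h4
    refine ⟨?_, rfl⟩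
    exact h0.resolve_right h13
  -- span inclusions
  have hle25 : Submodule.span ℂ {e₂, e₅} ≤ Module.End.eigenspace f (-(l₁ + l₃)) := by
    rw [Submodule.span_le]
    rintro x (rfl | rfl)
    · exact hmem _ _ h2
    · exact hmem _ _ h5
  have hle12 : Submodule.span ℂ {v₁, v₂} ≤ Module.End.eigenspace f 0 := by
    rw [Submodule.span_le]
    rintro x (rfl | rfl)
    · exact hmem _ _ h1z
    · exact hmem _ _ h2z
  have hge0 : 2 ≤ Module.finrank ℂ (Module.End.eigenspace f 0) := by
    rw [← hind v₁ v₂ hi12]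
    exact Submodule.finrank_mono hle12
  have hgeμ : 2 ≤ Module.finrank ℂ (Module.End.eigenspace f (-(l₁ + l₃))) := by
    rw [← hind e₂ e₅ hi25]
    exact Submodule.finrank_mono hle25
  -- disjointness and dimension count
  have hne : (0 : ℂ) ≠ -(l₁ + l₃) := by
    intro h
    exact h13 (neg_eq_zero.mp h.symm)
  have hdisj : Disjoint (Module.End.eigenspace f 0)
      (Module.End.eigenspace f (-(l₁ + l₃))) :=
    (Module.End.eigenspaces_iSupIndep f).pairwiseDisjoint hne
  have hsum : Module.finrank ℂ (Module.End.eigenspace f 0) +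
      Module.finrank ℂ (Module.End.eigenspace f (-(l₁ + l₃))) ≤ 4 := by
    have hkey := Submodule.finrank_sup_add_finrank_inf_eq
      (Module.End.eigenspace f 0) (Module.End.eigenspace f (-(l₁ + l₃)))
    rw [disjoint_iff.mp hdisj, finrank_bot, add_zero] at hkey
    rw [← hkey]
    have := Submodule.finrank_le
      (Module.End.eigenspace f 0 ⊔ Module.End.eigenspace f (-(l₁ + l₃)))
    simpa using this
  have hr0 : Module.finrank ℂ (Module.End.eigenspace f 0) = 2 := by omega
  have hrμ : Module.finrank ℂ (Module.End.eigenspace f (-(l₁ + l₃))) = 2 := by omega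
  refine ⟨hr0, hrμ, ?_, h2, h5⟩
  exact Submodule.eq_of_le_of_finrank_eq hle25 (by rw [hind e₂ e₅ hi25, hrμ])
end

section
/- The matrix Ξ̂² of Theorem 5.3 has eigenvalues 0 and −(λ₂+λ₃), each with 2-dimensional eigenspace, and e₃ = (0,0,1,0) and e₅ = (λ₁₂₃/λ₃, (λ₂−λ₄)/λ₃, (λ₁−λ₄)/λ₃, 1) are left eigenvectors with eigenvalue −(λ₂+λ₃): e₃Ξ̂² = −(λ₂+λ₃)e₃ and e₅Ξ̂² = −(λ₂+λ₃)e₅. -/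
set_option maxHeartbeats 1000000


open Matrix

lemma finrank_ker_eq_two (A : Matrix (Fin 4) (Fin 4) ℂ)
    (B : Matrix (Fin 4) (Fin 2) ℂ) (C : Matrix (Fin 2) (Fin 4) ℂ) (hBC : A = B * C)
    (F : Matrix (Fin 2) (Fin 4) ℂ) (E : Matrix (Fin 4) (Fin 2) ℂ)
    (h : IsUnit (F * A * E)) :
    Module.finrank ℂ (LinearMap.ker A.mulVecLin) = 2 := by
  have hrank : A.rank = 2 := by
    refine le_antisymm ?_ ?_
    · calc A.rank = (B * C).rank := by rw [hBC]
        _ ≤ B.rank := Matrix.rank_mul_le_left _ _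
        _ ≤ Fintype.card (Fin 2) := Matrix.rank_le_card_width _
        _ = 2 := by simp
    · calc (2 : ℕ) = (F * A * E).rank := by
            rw [Matrix.rank_of_isUnit _ h]; simp
        _ ≤ (A * E).rank := by
            rw [Matrix.mul_assoc]; exact Matrix.rank_mul_le_right _ _
        _ ≤ A.rank := Matrix.rank_mul_le_left _ _
  have h2 := LinearMap.finrank_range_add_finrank_ker A.mulVecLin
  rw [Matrix.rank] at hrank
  rw [hrank] at h2
  simp only [Module.finrank_pi, Fintype.card_fin] at h2
  omega

lemma eigenspace_toLin'_eq_ker (M : Matrix (Fin 4) (Fin 4) ℂ) (μ : ℂ) :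
    Module.End.eigenspace (Matrix.toLin' Mᵀ) μ = LinearMap.ker (Mᵀ - μ • 1).mulVecLin := by
  rw [Module.End.eigenspace_def]
  congr 1
  rw [← Matrix.toLin'_apply', map_sub, LinearEquiv.map_smul, Matrix.toLin'_one]
  rfl

/-- Lemma 5.7 (ii): `Ξ̂²` has eigenvalues `0` and `-(λ₂+λ₃)`, each with a
`2`-dimensional (left) eigenspace, and `e₃ = (0,0,1,0)` and
`e₅ = (λ₁₂₃/λ₃, (λ₂-λ₄)/λ₃, (λ₁-λ₄)/λ₃, 1)` are left eigenvectors with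
eigenvalue `-(λ₂+λ₃)`. -/
theorem XiHat2_eigen (l₁ l₂ l₃ l₄ : ℂ) (hl₃ : l₃ ≠ 0) (h23 : l₂ + l₃ ≠ 0) :
    let M := XiHat2 l₁ l₂ l₃ l₄;
    let e₃ : Fin 4 → ℂ := ![0, 0, 1, 0];
    let e₅ : Fin 4 → ℂ :=
      ![(l₁ + l₂ + l₃) / l₃, (l₂ - l₄) / l₃, (l₁ - l₄) / l₃, 1];
    Module.finrank ℂ (Module.End.eigenspace (Matrix.toLin' Mᵀ) 0) = 2 ∧
    Module.finrank ℂ (Module.End.eigenspace (Matrix.toLin' Mᵀ) (-(l₂ + l₃))) = 2 ∧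
    Matrix.vecMul e₃ M = (-(l₂ + l₃)) • e₃ ∧
    Matrix.vecMul e₅ M = (-(l₂ + l₃)) • e₅ := by
  intro M e₃ e₅
  refine ⟨?_, ?_, ?_, ?_⟩
  · -- eigenvalue 0
    rw [eigenspace_toLin'_eq_ker]
    refine finrank_ker_eq_two _
      !![-(l₁+l₂+l₃)/2, 0; (l₄-l₂)/2, 0; (l₄-l₁)/2, -(l₂+l₃); -l₃/2, 0]
      !![0, 1, 0, (l₂+2*l₃+l₄)/l₃; l₄/(l₂+l₃), 0, 1, -l₁*(l₂+l₃+l₄)/(l₃*(l₂+l₃))]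
      ?_ !![0,0,0,1; 0,0,1,0] !![0,0; 1,0; 0,1; 0,0] ?_
    · ext i j
      fin_cases i <;> fin_cases j <;>
        (try simp [XiHat2, M, e₃, e₅, Matrix.mul_apply, Matrix.vecMul, dotProduct, Fin.sum_univ_two,
          Fin.sum_univ_four, Matrix.vecHead, Matrix.vecTail, Matrix.one_apply, Matrix.det_fin_two]) <;> (try field_simp [hl₃, h23]) <;> try ring
    · rw [Matrix.isUnit_iff_isUnit_det, isUnit_iff_ne_zero]
      have hdet : (!![(0:ℂ),0,0,1; 0,0,1,0] * (Mᵀ - (0:ℂ) • 1) * !![(0:ℂ),0; 1,0; 0,1; 0,0]).det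
          = l₃ * (l₂ + l₃) / 2 := by
        (try simp [XiHat2, M, e₃, e₅, Matrix.mul_apply, Matrix.vecMul, dotProduct, Fin.sum_univ_two,
          Fin.sum_univ_four, Matrix.vecHead, Matrix.vecTail, Matrix.one_apply, Matrix.det_fin_two]) <;> (try field_simp [hl₃, h23]) <;> try ring
      rw [hdet]
      simp [hl₃, h23]
  · -- eigenvalue -(l₂+l₃)
    rw [eigenspace_toLin'_eq_ker]
    refine finrank_ker_eq_two _
      !![l₂+l₃, -(l₁+l₂+l₃)/2; 0, (l₂+2*l₃+l₄)/2; -l₄, (l₄-l₁)/2; 0, -l₃/2]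
      !![1, 0, 0, -(l₁+l₂+l₃)/l₃; 0, 1, 0, -(l₂-l₄)/l₃]
      ?_ !![1,0,0,0; 0,0,0,1] !![1,0; 0,1; 0,0; 0,0] ?_
    · ext i j
      fin_cases i <;> fin_cases j <;>
        (try simp [XiHat2, M, e₃, e₅, Matrix.mul_apply, Matrix.vecMul, dotProduct, Fin.sum_univ_two,
          Fin.sum_univ_four, Matrix.vecHead, Matrix.vecTail, Matrix.one_apply, Matrix.det_fin_two]) <;> (try field_simp [hl₃, h23]) <;> try ring
    · rw [Matrix.isUnit_iff_isUnit_det, isUnit_iff_ne_zero]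
      have hdet : (!![(1:ℂ),0,0,0; 0,0,0,1] * (Mᵀ - (-(l₂+l₃)) • 1) * !![(1:ℂ),0; 0,1; 0,0; 0,0]).det
          = -((l₂ + l₃) * l₃) / 2 := by
        (try simp [XiHat2, M, e₃, e₅, Matrix.mul_apply, Matrix.vecMul, dotProduct, Fin.sum_univ_two,
          Fin.sum_univ_four, Matrix.vecHead, Matrix.vecTail, Matrix.one_apply, Matrix.det_fin_two]) <;> (try field_simp [hl₃, h23]) <;> try ring
      rw [hdet]
      simp [hl₃, h23]
  · funext i
    fin_cases i <;>
      (try simp [XiHat2, M, e₃, e₅, Matrix.mul_apply, Matrix.vecMul, dotProduct, Fin.sum_univ_two,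
          Fin.sum_univ_four, Matrix.vecHead, Matrix.vecTail, Matrix.one_apply, Matrix.det_fin_two]) <;> (try field_simp [hl₃, h23]) <;> try ring
  · funext i
    have h4 : l₃ ^ 4 * l₃⁻¹ ^ 4 = 1 := by
      rw [← mul_pow, mul_inv_cancel₀ hl₃, one_pow]
    fin_cases i <;>
      (try simp [XiHat2, M, e₃, e₅, Matrix.mul_apply, Matrix.vecMul, dotProduct, Fin.sum_univ_two,
          Fin.sum_univ_four, Matrix.vecHead, Matrix.vecTail, Matrix.one_apply, Matrix.det_fin_two]) <;> (try field_simp [hl₃, h23]) <;> (try ring) <;> try linear_combination (-(l₁ * l₂) - l₁ * l₃ + l₂ * l₄ + l₃ * l₄) * h4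
end

section
/- Ξ̂¹ satisfies the quadratic equation Ξ̂¹(Ξ̂¹ + (λ₁+λ₃)I₄) = 0, i.e., Ξ̂¹ is diagonalizable with minimal polynomial t(t + λ₁ + λ₃) (for generic λ with λ₁+λ₃ ≠ 0). -/
open Matrix

set_option maxHeartbeats 2000000

/-- `Ξ̂¹` satisfies `Ξ̂¹(Ξ̂¹ + (λ₁+λ₃)I₄) = 0`; for `λ₃ ≠ 0` and
`λ₁+λ₃ ≠ 0` it is diagonalizable with minimal polynomial `t(t+λ₁+λ₃)`. -/
theorem XiHat1_quadratic (l₁ l₂ l₃ l₄ : ℂ) (hl₃ : l₃ ≠ 0) (h13 : l₁ + l₃ ≠ 0) :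
    XiHat1 l₁ l₂ l₃ l₄ * (XiHat1 l₁ l₂ l₃ l₄ + (l₁ + l₃) • (1 : Matrix (Fin 4) (Fin 4) ℂ)) = 0 ∧
    minpoly ℂ (XiHat1 l₁ l₂ l₃ l₄) =
      Polynomial.X * (Polynomial.X + Polynomial.C (l₁ + l₃)) := by
  have hquad : XiHat1 l₁ l₂ l₃ l₄ *
      (XiHat1 l₁ l₂ l₃ l₄ + (l₁ + l₃) • (1 : Matrix (Fin 4) (Fin 4) ℂ)) = 0 := by
    ext i j
    fin_cases i <;> fin_cases j <;>
      simp [XiHat1, Matrix.mul_apply, Fin.sum_univ_four, Matrix.one_apply] <;>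
      field_simp <;> ring
  refine ⟨hquad, ?_⟩
  open Polynomial in
  set M := XiHat1 l₁ l₂ l₃ l₄ with hM
  set c := l₁ + l₃ with hc
  have hpmonic : (X * (X + C c) : ℂ[X]).Monic := monic_X.mul (monic_X_add_C c)
  have hpdeg : (X * (X + C c) : ℂ[X]).natDegree = 2 := by compute_degree!
  have haev : aeval M (X * (X + C c) : ℂ[X]) = 0 := by
    rw [_root_.map_mul, _root_.map_add, aeval_X, aeval_C, Algebra.algebraMap_eq_smul_one]
    exact hquad
  have hdvd : minpoly ℂ M ∣ X * (X + C c) := minpoly.dvd ℂ M haev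
  have hint : IsIntegral ℂ M := Matrix.isIntegral M
  have hmonic := minpoly.monic hint
  have hdle : (minpoly ℂ M).natDegree ≤ 2 := hpdeg ▸ natDegree_le_of_dvd hdvd hpmonic.ne_zero
  have hdpos : 0 < (minpoly ℂ M).natDegree := minpoly.natDegree_pos hint
  rcases (by omega : (minpoly ℂ M).natDegree = 1 ∨ (minpoly ℂ M).natDegree = 2) with h1 | h2
  · exfalso
    have heq := hmonic.eq_X_add_C h1
    have h0 : aeval M (minpoly ℂ M) = 0 := minpoly.aeval ℂ M
    rw [heq, _root_.map_add, aeval_X, aeval_C, Algebra.algebraMap_eq_smul_one] at h0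
    have h00 := congrFun (congrFun h0 0) 0
    have h11 := congrFun (congrFun h0 1) 1
    simp [XiHat1, Matrix.one_apply, hM] at h00 h11
    rw [h00] at h11
    simp at h11
    exact h13 (by linear_combination -h11)
  · exact (eq_of_monic_of_dvd_of_natDegree_le hmonic hpmonic hdvd (by omega)).symm
end
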